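/- arXiv:2308.15681 — 4 statements merged into one kernel-verified Lean document; each statement's English description precedes it below -/
import Mathlib

section
/- Let S be a finite subset of {1,…,R} × {1,…,C} with |S| = N ≥ 1, and let (η_{ij})_{(i,j)∈S} be real square-integrable random variables with |η_{ij}| ≤ B almost surely for some constant B < ∞, such that Cov(η_{ij}, η_{rs}) = 0 whenever i ≠ r and j ≠ s. Then Var(N^{-1} Σ_{(i,j)∈S} η_{ij}) ≤ B²(ε_R + ε_C), where ε_R = max_i N_{i·}/N and ε_C = max_j N_{·j}/N with N_{i·} = #{j : (i,j) ∈ S} and N_{·j} = #{i : (i,j) ∈ S}. -/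
open MeasureTheory ProbabilityTheory Finset

/-- Variance bound for the normalized sum of uniformly bounded, square-integrable
random variables indexed by a finite set `S` of (row, column) pairs, any two of
which are uncorrelated when they share neither a row nor a column:
`Var(N⁻¹ Σ_{(i,j)∈S} η_{ij}) ≤ B²(ε_R + ε_C)` where `ε_R = max_i N_{i·}/N` and
`ε_C = max_j N_{·j}/N`. -/
theorem variance_bound_row_col_dependence
    {R C : ℕ} (S : Finset (Fin R × Fin C)) (N : ℕ) (hN : S.card = N) (hN1 : 1 ≤ N)
    {Ω : Type*} [MeasurableSpace Ω] (P : Measure Ω) [IsProbabilityMeasure P]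
    (η : Fin R × Fin C → Ω → ℝ) (B : ℝ)
    (hmem : ∀ p ∈ S, MemLp (η p) 2 P)
    (hbd : ∀ p ∈ S, ∀ᵐ ω ∂P, |η p ω| ≤ B)
    (huncorr : ∀ p ∈ S, ∀ q ∈ S, p.1 ≠ q.1 → p.2 ≠ q.2 →
      ∫ ω, (η p ω - ∫ ω', η p ω' ∂P) * (η q ω - ∫ ω', η q ω' ∂P) ∂P = 0)
    (εR εC : ℝ)
    (hεR : εR = ((univ.sup (fun i => (S.filter (fun p => p.1 = i)).card) : ℕ) : ℝ) / N)
    (hεC : εC = ((univ.sup (fun j => (S.filter (fun p => p.2 = j)).card) : ℕ) : ℝ) / N) :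
    variance (fun ω => (N : ℝ)⁻¹ * ∑ p ∈ S, η p ω) P ≤ B ^ 2 * (εR + εC) := by
  classical
  subst hN hεR hεC
  set N := S.card with hNdef
  have hNpos : (0 : ℝ) < N := by exact_mod_cast hN1
  set MR : ℕ := univ.sup (fun i => (S.filter (fun p => p.1 = i)).card) with hMR
  set MC : ℕ := univ.sup (fun j => (S.filter (fun p => p.2 = j)).card) with hMC
  -- centered variables
  set X : Fin R × Fin C → Ω → ℝ := fun p ω => η p ω - ∫ ω', η p ω' ∂P with hX
  clear_value X
  have hXmem : ∀ p ∈ S, MemLp (X p) 2 P := by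
    intro p hp
    rw [hX]
    exact (hmem p hp).sub (memLp_const _)
  -- each centered second moment is at most B^2
  have hvar : ∀ p ∈ S, ∫ ω, X p ω ^ 2 ∂P ≤ B ^ 2 := by
    intro p hp
    have h1 : ∫ ω, X p ω ^ 2 ∂P = variance (η p) P := by
      rw [variance_eq_integral (hmem p hp).aemeasurable]
      simp only [hX, Pi.pow_apply, Pi.sub_apply]
    have h2 : variance (η p) P ≤ ∫ ω, η p ω ^ 2 ∂P := by
      rw [variance_eq_sub (hmem p hp)]
      have : (0:ℝ) ≤ (∫ ω, η p ω ∂P) ^ 2 := sq_nonneg _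
      simp only [Pi.pow_apply]
      linarith
    have h3 : ∫ ω, η p ω ^ 2 ∂P ≤ B ^ 2 := by
      have hint : Integrable (fun ω => η p ω ^ 2) P := by
        simpa [sq] using (hmem p hp).integrable_sq
      calc ∫ ω, η p ω ^ 2 ∂P ≤ ∫ _ω, B ^ 2 ∂P := by
            refine integral_mono_ae hint (integrable_const _) ?_
            filter_upwards [hbd p hp] with ω hω
            calc η p ω ^ 2 = |η p ω| ^ 2 := (sq_abs _).symm
              _ ≤ B ^ 2 := by
                  have := abs_nonneg (η p ω)
                  nlinarith
        _ = B ^ 2 := by simp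
    linarith [h1, h2, h3]
  have hB0 : 0 ≤ B := by
    obtain ⟨p0, hp0⟩ := card_pos.mp (lt_of_lt_of_le one_pos hN1)
    obtain ⟨ω, hω⟩ := (hbd p0 hp0).exists
    exact le_trans (abs_nonneg _) hω
  -- products are integrable
  have hprodint : ∀ p ∈ S, ∀ q ∈ S, Integrable (fun ω => X p ω * X q ω) P := by
    intro p hp q hq
    have h := (hXmem q hq).smul (hXmem p hp)
      (p := 2) (q := 2) (r := 1)
    rw [memLp_one_iff_integrable] at h
    exact h
  -- each covariance term is at most B^2
  have hcov : ∀ p ∈ S, ∀ q ∈ S, ∫ ω, X p ω * X q ω ∂P ≤ B ^ 2 := by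
    intro p hp q hq
    have hXpsq : Integrable (fun ω => X p ω ^ 2) P := by
      simpa [sq] using (hXmem p hp).integrable_sq
    have hXqsq : Integrable (fun ω => X q ω ^ 2) P := by
      simpa [sq] using (hXmem q hq).integrable_sq
    calc ∫ ω, X p ω * X q ω ∂P
        ≤ ∫ ω, (X p ω ^ 2 + X q ω ^ 2) / 2 ∂P := by
          refine integral_mono (hprodint p hp q hq) ((hXpsq.add hXqsq).div_const 2)
            fun ω => ?_
          have h2 := two_mul_le_add_sq (X p ω) (X q ω)
          show X p ω * X q ω ≤ (X p ω ^ 2 + X q ω ^ 2) / 2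
          linarith only [h2]
      _ = ((∫ ω, X p ω ^ 2 ∂P) + ∫ ω, X q ω ^ 2 ∂P) / 2 := by
          rw [integral_div, integral_add hXpsq hXqsq]
      _ ≤ B ^ 2 := by
          have := hvar p hp
          have := hvar q hq
          linarith
  -- variance of the sum
  have hTmem : MemLp (fun ω => ∑ p ∈ S, η p ω) 2 P :=
    memLp_finset_sum S hmem
  have hprodint' : ∀ p ∈ S, ∀ q ∈ S,
      Integrable (fun ω => (η p ω - ∫ ω', η p ω' ∂P) * (η q ω - ∫ ω', η q ω' ∂P)) P := by
    have h := hprodint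
    simp only [hX] at h
    exact h
  have hTvar : variance (fun ω => ∑ p ∈ S, η p ω) P
      = ∑ p ∈ S, ∑ q ∈ S, ∫ ω, X p ω * X q ω ∂P := by
    rw [variance_eq_integral hTmem.aemeasurable]
    have hIT : ∫ ω, ∑ p ∈ S, η p ω ∂P = ∑ p ∈ S, ∫ ω, η p ω ∂P :=
      integral_finset_sum S (fun p hp => (hmem p hp).integrable one_le_two)
    simp only [Pi.pow_apply, Pi.sub_apply, hX]
    rw [hIT]
    simp_rw [← Finset.sum_sub_distrib, sq, Finset.sum_mul_sum]
    rw [integral_finset_sum S (fun p hp =>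
      integrable_finset_sum S (fun q hq => hprodint' p hp q hq))]
    exact Finset.sum_congr rfl fun p hp =>
      integral_finset_sum S (fun q hq => hprodint' p hp q hq)
  -- bound the double sum
  have hdouble : ∑ p ∈ S, ∑ q ∈ S, ∫ ω, X p ω * X q ω ∂P
      ≤ (N : ℝ) * (B ^ 2 * ((MR : ℝ) + (MC : ℝ))) := by
    have hinner : ∀ p ∈ S, ∑ q ∈ S, ∫ ω, X p ω * X q ω ∂P
        ≤ B ^ 2 * ((MR : ℝ) + (MC : ℝ)) := by
      intro p hp
      have step1 : ∑ q ∈ S, ∫ ω, X p ω * X q ω ∂P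
          ≤ ∑ q ∈ S, (if q.1 = p.1 ∨ q.2 = p.2 then B ^ 2 else 0) := by
        refine Finset.sum_le_sum fun q hq => ?_
        by_cases h : q.1 = p.1 ∨ q.2 = p.2
        · rw [if_pos h]; exact hcov p hp q hq
        · rw [if_neg h]
          push_neg at h
          simp only [hX]
          exact le_of_eq (huncorr p hp q hq (Ne.symm h.1) (Ne.symm h.2))
      have step2 : ∑ q ∈ S, (if q.1 = p.1 ∨ q.2 = p.2 then B ^ 2 else (0:ℝ))
          = ((S.filter (fun q => q.1 = p.1 ∨ q.2 = p.2)).card : ℝ) * B ^ 2 := by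
        rw [← Finset.sum_filter, Finset.sum_const, nsmul_eq_mul]
      have step3 : (S.filter (fun q => q.1 = p.1 ∨ q.2 = p.2)).card ≤ MR + MC := by
        have hsub : S.filter (fun q => q.1 = p.1 ∨ q.2 = p.2)
            = S.filter (fun q => q.1 = p.1) ∪ S.filter (fun q => q.2 = p.2) := by
          rw [Finset.filter_or]
        rw [hsub]
        calc (S.filter (fun q => q.1 = p.1) ∪ S.filter (fun q => q.2 = p.2)).card
            ≤ (S.filter (fun q => q.1 = p.1)).card
              + (S.filter (fun q => q.2 = p.2)).card := Finset.card_union_le _ _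
          _ ≤ MR + MC := add_le_add
              (Finset.le_sup (f := fun i => (S.filter (fun p => p.1 = i)).card)
                (Finset.mem_univ p.1))
              (Finset.le_sup (f := fun j => (S.filter (fun p => p.2 = j)).card)
                (Finset.mem_univ p.2))
      calc ∑ q ∈ S, ∫ ω, X p ω * X q ω ∂P
          ≤ ((S.filter (fun q => q.1 = p.1 ∨ q.2 = p.2)).card : ℝ) * B ^ 2 := by
            rw [← step2]; exact step1
        _ ≤ ((MR : ℝ) + (MC : ℝ)) * B ^ 2 := by
            refine mul_le_mul_of_nonneg_right ?_ (sq_nonneg B)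
            exact_mod_cast step3
        _ = B ^ 2 * ((MR : ℝ) + (MC : ℝ)) := mul_comm _ _
    calc ∑ p ∈ S, ∑ q ∈ S, ∫ ω, X p ω * X q ω ∂P
        ≤ ∑ _p ∈ S, B ^ 2 * ((MR : ℝ) + (MC : ℝ)) := Finset.sum_le_sum hinner
      _ = (N : ℝ) * (B ^ 2 * ((MR : ℝ) + (MC : ℝ))) := by
          rw [Finset.sum_const, nsmul_eq_mul]
  -- put everything together
  rw [variance_const_mul, hTvar]
  have hfinal : ((N:ℝ)⁻¹) ^ 2 * ((N : ℝ) * (B ^ 2 * ((MR : ℝ) + (MC : ℝ))))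
      = B ^ 2 * ((MR : ℝ) / N + (MC : ℝ) / N) := by
    field_simp
  calc ((N:ℝ)⁻¹) ^ 2 * ∑ p ∈ S, ∑ q ∈ S, ∫ ω, X p ω * X q ω ∂P
      ≤ ((N:ℝ)⁻¹) ^ 2 * ((N : ℝ) * (B ^ 2 * ((MR : ℝ) + (MC : ℝ)))) := by
        refine mul_le_mul_of_nonneg_left hdouble ?_
        positivity
    _ = B ^ 2 * ((MR : ℝ) / N + (MC : ℝ) / N) := hfinal
end

section
/- Fix t₀ ∈ ℝ and define g : ℝ → ℝ by g(t) = Φ(t₀)·log Φ(t) + Φ(−t₀)·log Φ(−t), where Φ is the standard normal cumulative distribution function. Then g attains its maximum over ℝ at t = t₀, and t₀ is the unique maximizer. -/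
open MeasureTheory ProbabilityTheory

/-- The cumulative distribution function of the standard normal distribution. -/
noncomputable def stdNormCDF (t : ℝ) : ℝ := ((gaussianReal 0 1) (Set.Iic t)).toReal

lemma gauss_pos {s : Set ℝ} (h : volume s ≠ 0) : gaussianReal 0 1 s ≠ 0 := by
  intro h0
  exact h (gaussianReal_absolutelyContinuous' 0 one_ne_zero h0)

lemma gauss_singleton (t : ℝ) : gaussianReal 0 1 {t} = 0 :=
  gaussianReal_absolutelyContinuous 0 one_ne_zero (by simp)

lemma gauss_neg_map : (gaussianReal 0 1).map (fun x => -x) = gaussianReal 0 1 := by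
  have := gaussianReal_map_const_mul (μ := 0) (v := 1) (-1)
  simp only [neg_one_mul, mul_zero, neg_zero] at this
  convert this using 2
  norm_num [← NNReal.coe_inj]

lemma gauss_Ici_eq_Ioi (t : ℝ) :
    gaussianReal 0 1 (Set.Ici t) = gaussianReal 0 1 (Set.Ioi t) := by
  refine le_antisymm ?_ (measure_mono Set.Ioi_subset_Ici_self)
  calc gaussianReal 0 1 (Set.Ici t) = gaussianReal 0 1 (Set.Ioi t ∪ {t}) := by
        rw [Set.Ioi_union_left]
    _ ≤ gaussianReal 0 1 (Set.Ioi t) + gaussianReal 0 1 {t} := measure_union_le _ _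
    _ = gaussianReal 0 1 (Set.Ioi t) := by rw [gauss_singleton, add_zero]

lemma stdNormCDF_neg (t : ℝ) : stdNormCDF (-t) = 1 - stdNormCDF t := by
  have hmap : gaussianReal 0 1 (Set.Iic (-t)) = gaussianReal 0 1 (Set.Ici t) := by
    conv_lhs => rw [← gauss_neg_map]
    rw [Measure.map_apply measurable_neg measurableSet_Iic]
    congr 1
    ext x
    simp [neg_le]
  have hcompl : gaussianReal 0 1 (Set.Ioi t) = 1 - gaussianReal 0 1 (Set.Iic t) := by
    rw [← Set.compl_Iic, measure_compl measurableSet_Iic (measure_ne_top _ _),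
      measure_univ]
  have hle : gaussianReal 0 1 (Set.Iic t) ≤ 1 := prob_le_one
  unfold stdNormCDF
  rw [hmap, gauss_Ici_eq_Ioi, hcompl, ENNReal.toReal_sub_of_le hle (by norm_num)]
  simp

lemma stdNormCDF_pos (t : ℝ) : 0 < stdNormCDF t := by
  unfold stdNormCDF
  rw [ENNReal.toReal_pos_iff]
  refine ⟨?_, lt_of_le_of_lt prob_le_one (by norm_num)⟩
  rw [pos_iff_ne_zero]
  exact gauss_pos (by simp)

lemma stdNormCDF_lt_one (t : ℝ) : stdNormCDF t < 1 := by
  have h := stdNormCDF_pos (-t)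
  rw [stdNormCDF_neg] at h
  linarith

lemma stdNormCDF_strictMono : StrictMono stdNormCDF := by
  intro a b hab
  unfold stdNormCDF
  have hsplit : Set.Iic a ∪ Set.Ioc a b = Set.Iic b := Set.Iic_union_Ioc_eq_Iic hab.le
  have hdisj : Disjoint (Set.Iic a) (Set.Ioc a b) := by
    rw [Set.disjoint_left]
    intro x hx hx'
    exact absurd hx'.1 (not_lt.mpr hx)
  have := measure_union (μ := gaussianReal 0 1) hdisj measurableSet_Ioc
  rw [hsplit] at this
  have hpos : gaussianReal 0 1 (Set.Ioc a b) ≠ 0 := gauss_pos (by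
    rw [Real.volume_Ioc]
    simp [ENNReal.ofReal_eq_zero]; linarith)
  rw [ENNReal.toReal_lt_toReal (measure_ne_top _ _) (measure_ne_top _ _), this]
  exact ENNReal.lt_add_right (measure_ne_top _ _) hpos

lemma gibbs_lt {p q : ℝ} (hp0 : 0 < p) (hp1 : p < 1) (hq0 : 0 < q) (hq1 : q < 1)
    (hne : q ≠ p) :
    p * Real.log q + (1 - p) * Real.log (1 - q)
      < p * Real.log p + (1 - p) * Real.log (1 - p) := by
  have hqp : (0:ℝ) < q / p := div_pos hq0 hp0
  have hqp1 : q / p ≠ 1 := by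
    intro h
    rw [div_eq_one_iff_eq hp0.ne'] at h; exact hne h
  have h1 : Real.log (q / p) < q / p - 1 := Real.log_lt_sub_one_of_pos hqp hqp1
  have h1' : p * Real.log q - p * Real.log p < q - p := by
    rw [← mul_sub, ← Real.log_div hq0.ne' hp0.ne']
    calc p * Real.log (q / p) < p * (q / p - 1) := by
          exact (mul_lt_mul_iff_right₀ hp0).mpr h1
      _ = q - p := by field_simp
  have h2 : Real.log ((1 - q) / (1 - p)) ≤ (1 - q) / (1 - p) - 1 :=
    Real.log_le_sub_one_of_pos (div_pos (by linarith) (by linarith))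
  have h2' : (1 - p) * Real.log (1 - q) - (1 - p) * Real.log (1 - p) ≤ p - q := by
    rw [← mul_sub, ← Real.log_div (by linarith) (by linarith)]
    calc (1 - p) * Real.log ((1 - q) / (1 - p)) ≤ (1 - p) * ((1 - q) / (1 - p) - 1) := by
          exact (mul_le_mul_iff_right₀ (by linarith)).mpr h2
      _ = p - q := by rw [mul_sub, mul_div_cancel₀ _ (by linarith : (1:ℝ) - p ≠ 0)]; ring
  linarith

/-- For fixed `t₀`, the function `g(t) = Φ(t₀)·log Φ(t) + Φ(−t₀)·log Φ(−t)` attains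
its maximum over `ℝ` at `t = t₀`, and `t₀` is the unique maximizer. -/
theorem limit_objective_unique_maximizer
    (t₀ : ℝ) (g : ℝ → ℝ)
    (hg : ∀ t, g t = stdNormCDF t₀ * Real.log (stdNormCDF t)
        + stdNormCDF (-t₀) * Real.log (stdNormCDF (-t))) :
    (∀ t, g t ≤ g t₀) ∧ (∀ t, g t = g t₀ → t = t₀) := by
  have key : ∀ t, t ≠ t₀ → g t < g t₀ := by
    intro t ht
    rw [hg t, hg t₀, stdNormCDF_neg t, stdNormCDF_neg t₀]
    exact gibbs_lt (stdNormCDF_pos t₀) (stdNormCDF_lt_one t₀) (stdNormCDF_pos t)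
      (stdNormCDF_lt_one t) (fun h => ht (stdNormCDF_strictMono.injective h))
  constructor
  · intro t
    by_cases h : t = t₀
    · rw [h]
    · exact (key t h).le
  · intro t h
    by_contra hne
    exact absurd h (key t hne).ne
end

section
/- Fix t₀ ∈ ℝ and define g : ℝ → ℝ by g(t) = Φ(t₀)·log Φ(t) + Φ(−t₀)·log Φ(−t). Then g is twice differentiable, g'(t₀) = 0, and g''(t₀) = −φ(t₀)² / (Φ(t₀)·Φ(−t₀)). -/
open MeasureTheory ProbabilityTheory

/-- The probability density function of the standard normal distribution. -/
noncomputable def stdNormPDF (t : ℝ) : ℝ := gaussianPDFReal 0 1 t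

lemma stdNormPDF_continuous : Continuous stdNormPDF := by
  unfold stdNormPDF gaussianPDFReal
  fun_prop

lemma stdNormPDF_pos (t : ℝ) : 0 < stdNormPDF t :=
  gaussianPDFReal_pos 0 1 t one_ne_zero

lemma stdNormPDF_neg (t : ℝ) : stdNormPDF (-t) = stdNormPDF t := by
  simp [stdNormPDF, gaussianPDFReal, neg_sq]

lemma stdNormPDF_integrable : Integrable stdNormPDF :=
  integrable_gaussianPDFReal 0 1

lemma stdNormCDF_eq (t : ℝ) : stdNormCDF t = ∫ x in Set.Iic t, stdNormPDF x := by
  rw [stdNormCDF, gaussianReal_apply_eq_integral 0 one_ne_zero,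
    ENNReal.toReal_ofReal]
  · rfl
  · exact setIntegral_nonneg measurableSet_Iic fun x _ => (stdNormPDF_pos x).le

lemma stdNormCDF_sub (a t : ℝ) :
    stdNormCDF t = stdNormCDF a + ∫ x in a..t, stdNormPDF x := by
  rw [stdNormCDF_eq, stdNormCDF_eq,
    ← intervalIntegral.integral_Iic_sub_Iic stdNormPDF_integrable.integrableOn
      stdNormPDF_integrable.integrableOn]
  ring

lemma stdNormCDF_hasDerivAt (t : ℝ) : HasDerivAt stdNormCDF (stdNormPDF t) t := by
  have h : HasDerivAt (fun u => ∫ x in (0:ℝ)..u, stdNormPDF x) (stdNormPDF t) t :=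
    intervalIntegral.integral_hasDerivAt_right
      stdNormPDF_integrable.intervalIntegrable
      stdNormPDF_continuous.aestronglyMeasurable.stronglyMeasurableAtFilter
      stdNormPDF_continuous.continuousAt
  have : HasDerivAt (fun u => stdNormCDF 0 + ∫ x in (0:ℝ)..u, stdNormPDF x)
      (stdNormPDF t) t := (h.const_add _)
  exact this.congr_of_eventuallyEq (Filter.Eventually.of_forall fun u =>
    (stdNormCDF_sub 0 u))

lemma stdNormCDF_add_neg (t : ℝ) : stdNormCDF t + stdNormCDF (-t) = 1 := by
  have hneg : stdNormCDF (-t) = ∫ x in Set.Ioi t, stdNormPDF x := by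
    rw [stdNormCDF_eq]
    have : (∫ x in Set.Iic (-t), stdNormPDF x) = ∫ x in Set.Iic (-t), stdNormPDF (-x) := by
      refine setIntegral_congr_fun measurableSet_Iic fun x _ => (stdNormPDF_neg x).symm
    rw [this, integral_comp_neg_Iic, neg_neg]
  rw [stdNormCDF_eq, hneg,
    intervalIntegral.integral_Iic_add_Ioi stdNormPDF_integrable.integrableOn
      stdNormPDF_integrable.integrableOn]
  exact integral_gaussianPDFReal_eq_one 0 one_ne_zero

lemma stdNormPDF_hasDerivAt (t : ℝ) :
    HasDerivAt stdNormPDF (-t * stdNormPDF t) t := by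
  have h : stdNormPDF = fun x : ℝ =>
      (Real.sqrt (2 * Real.pi))⁻¹ * Real.exp (-x ^ 2 / 2) := by
    funext x
    simp [stdNormPDF, gaussianPDFReal]
  rw [h]
  have hexp : HasDerivAt (fun x : ℝ => Real.exp (-x ^ 2 / 2))
      (Real.exp (-t ^ 2 / 2) * (-t)) t := by
    have hin : HasDerivAt (fun x : ℝ => -x ^ 2 / 2) (-t) t := by
      have := ((hasDerivAt_pow 2 t).neg).div_const 2
      simpa using this.congr_deriv (by ring)
    simpa using hin.exp
  have := hexp.const_mul (Real.sqrt (2 * Real.pi))⁻¹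
  refine this.congr_deriv ?_
  beta_reduce
  ring

/-- For fixed `t₀`, the function `g(t) = Φ(t₀)·log Φ(t) + Φ(−t₀)·log Φ(−t)` is twice
differentiable with `g'(t₀) = 0` and `g''(t₀) = −φ(t₀)² / (Φ(t₀)·Φ(−t₀))`. -/
theorem limit_objective_derivatives
    (t₀ : ℝ) (g : ℝ → ℝ)
    (hg : ∀ t, g t = stdNormCDF t₀ * Real.log (stdNormCDF t)
        + stdNormCDF (-t₀) * Real.log (stdNormCDF (-t))) :
    (∀ t, DifferentiableAt ℝ g t) ∧ (∀ t, DifferentiableAt ℝ (deriv g) t)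
      ∧ deriv g t₀ = 0
      ∧ deriv (deriv g) t₀
          = -(stdNormPDF t₀) ^ 2 / (stdNormCDF t₀ * stdNormCDF (-t₀)) := by
  have h1 : stdNormCDF t₀ ≠ 0 := (stdNormCDF_pos t₀).ne'
  have h2 : stdNormCDF (-t₀) ≠ 0 := (stdNormCDF_pos (-t₀)).ne'
  -- derivative of t ↦ stdNormCDF (-t)
  have hFneg : ∀ t : ℝ, HasDerivAt (fun t => stdNormCDF (-t)) (-(stdNormPDF t)) t := by
    intro t
    have := (stdNormCDF_hasDerivAt (-t)).comp t (hasDerivAt_neg t)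
    simpa [stdNormPDF_neg, Function.comp_def] using this
  -- first derivative of g
  have hg' : ∀ t : ℝ, HasDerivAt g
      (stdNormCDF t₀ * (stdNormPDF t / stdNormCDF t)
        - stdNormCDF (-t₀) * (stdNormPDF t / stdNormCDF (-t))) t := by
    intro t
    have ha : HasDerivAt (fun t => Real.log (stdNormCDF t))
        (stdNormPDF t / stdNormCDF t) t :=
      (stdNormCDF_hasDerivAt t).log (stdNormCDF_pos t).ne'
    have hb : HasDerivAt (fun t => Real.log (stdNormCDF (-t)))
        (-(stdNormPDF t) / stdNormCDF (-t)) t :=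
      (hFneg t).log (stdNormCDF_pos (-t)).ne'
    have hc := (ha.const_mul (stdNormCDF t₀)).add (hb.const_mul (stdNormCDF (-t₀)))
    have heq : HasDerivAt g
        (stdNormCDF t₀ * (stdNormPDF t / stdNormCDF t)
          + stdNormCDF (-t₀) * (-(stdNormPDF t) / stdNormCDF (-t))) t :=
      hc.congr_of_eventuallyEq (Filter.Eventually.of_forall fun u => (hg u))
    convert heq using 1
    ring
  have hderiv : deriv g = fun t =>
      stdNormCDF t₀ * (stdNormPDF t / stdNormCDF t)
        - stdNormCDF (-t₀) * (stdNormPDF t / stdNormCDF (-t)) :=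
    funext fun t => (hg' t).deriv
  -- second derivative
  have hg'' : ∀ t : ℝ, HasDerivAt (deriv g)
      (stdNormCDF t₀ * ((-t * stdNormPDF t * stdNormCDF t - stdNormPDF t * stdNormPDF t)
          / (stdNormCDF t) ^ 2)
        - stdNormCDF (-t₀) * ((-t * stdNormPDF t * stdNormCDF (-t)
            - stdNormPDF t * (-(stdNormPDF t))) / (stdNormCDF (-t)) ^ 2)) t := by
    intro t
    have ha : HasDerivAt (fun t => stdNormPDF t / stdNormCDF t)
        ((-t * stdNormPDF t * stdNormCDF t - stdNormPDF t * stdNormPDF t)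
          / (stdNormCDF t) ^ 2) t :=
      (stdNormPDF_hasDerivAt t).div (stdNormCDF_hasDerivAt t) (stdNormCDF_pos t).ne'
    have hb : HasDerivAt (fun t => stdNormPDF t / stdNormCDF (-t))
        ((-t * stdNormPDF t * stdNormCDF (-t) - stdNormPDF t * (-(stdNormPDF t)))
          / (stdNormCDF (-t)) ^ 2) t :=
      (stdNormPDF_hasDerivAt t).div (hFneg t) (stdNormCDF_pos (-t)).ne'
    have hc := (ha.const_mul (stdNormCDF t₀)).sub (hb.const_mul (stdNormCDF (-t₀)))
    rw [hderiv]
    exact hc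
  refine ⟨fun t => (hg' t).differentiableAt, fun t => (hg'' t).differentiableAt, ?_, ?_⟩
  · rw [(hg' t₀).deriv]
    field_simp
    ring
  · rw [(hg'' t₀).deriv]
    have hsum : stdNormCDF (-t₀) = 1 - stdNormCDF t₀ := by
      have := stdNormCDF_add_neg t₀
      linarith
    rw [hsum] at h2 ⊢
    field_simp
    ring
end

section
/- For each N ∈ ℕ let there be given nonnegative integers N_1(N), …, N_{R(N)}(N) with Σ_{i=1}^{R(N)} N_i(N) = N and R(N) ≤ N^ρ, where ρ, α > 0 satisfy ρ + α < 1. Suppose ε_R(N) := max_i N_i(N)/N → 0 as N → ∞. Then the number of indices i with N_i(N) ≥ N^α tends to infinity as N → ∞. -/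
open Finset Filter

/-- Theorem 2 of the paper (row version): in a crossed design with `R(N) ≤ N^ρ` rows,
row counts `N_i(N)` summing to `N`, `ρ + α < 1` with `ρ, α > 0`, and relative size of
the largest row `ε_R(N) = max_i N_i(N)/N → 0`, the number of rows `i` with
`N_i(N) ≥ N^α` tends to infinity as `N → ∞`. -/
theorem number_of_large_rows_tendsto_atTop
    (R : ℕ → ℕ) (Ni : (N : ℕ) → Fin (R N) → ℕ)
    (hsum : ∀ N, ∑ i, Ni N i = N)
    (ρ α : ℝ) (hρ : 0 < ρ) (hα : 0 < α) (hρα : ρ + α < 1)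
    (hR : ∀ N : ℕ, (R N : ℝ) ≤ (N : ℝ) ^ ρ)
    (hεR : Tendsto (fun N : ℕ => ((univ.sup (Ni N) : ℕ) : ℝ) / N) atTop (nhds 0)) :
    Tendsto
      (fun N : ℕ => (univ.filter (fun i => (N : ℝ) ^ α ≤ (Ni N i : ℝ))).card)
      atTop atTop := by
  rw [tendsto_atTop_atTop]
  intro K
  have hpow : Tendsto (fun N : ℕ => ((N : ℝ)) ^ (ρ + α - 1)) atTop (nhds 0) := by
    have h := (tendsto_rpow_neg_atTop (y := 1 - (ρ + α)) (by linarith)).comp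
      (tendsto_natCast_atTop_atTop (R := ℝ))
    have heq : -(1 - (ρ + α)) = ρ + α - 1 := by ring
    simpa [Function.comp_def, heq] using h
  have h2 : ∀ᶠ N : ℕ in atTop, ((N : ℝ)) ^ (ρ + α - 1) ≤ 1 / 2 :=
    hpow.eventually_le_const (by norm_num)
  have h3 : ∀ᶠ N : ℕ in atTop,
      ((univ.sup (Ni N) : ℕ) : ℝ) / N < 1 / (2 * (K + 1)) :=
    hεR.eventually_lt_const (by positivity)
  have h4 : ∀ᶠ N : ℕ in atTop, 1 ≤ N := eventually_ge_atTop 1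
  rcases ((h2.and h3).and h4).exists_forall_of_atTop with ⟨n0, hn0⟩
  refine ⟨n0, fun N hN => ?_⟩
  obtain ⟨⟨hpow2, hmax⟩, hN1⟩ := hn0 N hN
  have hNpos : (0 : ℝ) < N := by exact_mod_cast hN1
  set S := univ.filter (fun i => (N : ℝ) ^ α ≤ (Ni N i : ℝ)) with hS
  set M := (univ.sup (Ni N) : ℕ) with hM
  -- key inequality: N ≤ card S * M + N^(ρ+α)
  have hsplit : (N : ℝ) = ∑ i ∈ S, (Ni N i : ℝ) + ∑ i ∈ univ.filter
      (fun i => ¬ ((N : ℝ) ^ α ≤ (Ni N i : ℝ))), (Ni N i : ℝ) := by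
    rw [sum_filter_add_sum_filter_not]
    exact_mod_cast (hsum N).symm
  have hlarge : ∑ i ∈ S, (Ni N i : ℝ) ≤ S.card * M := by
    calc ∑ i ∈ S, (Ni N i : ℝ) ≤ ∑ _i ∈ S, (M : ℝ) := by
          refine sum_le_sum fun i _ => ?_
          exact_mod_cast Finset.le_sup (mem_univ i)
      _ = S.card * M := by rw [sum_const, nsmul_eq_mul]
  have hsmall : ∑ i ∈ univ.filter
      (fun i => ¬ ((N : ℝ) ^ α ≤ (Ni N i : ℝ))), (Ni N i : ℝ)
      ≤ (N : ℝ) ^ (ρ + α) := by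
    calc ∑ i ∈ univ.filter (fun i => ¬ ((N : ℝ) ^ α ≤ (Ni N i : ℝ))), (Ni N i : ℝ)
        ≤ ∑ _i ∈ univ.filter (fun i => ¬ ((N : ℝ) ^ α ≤ (Ni N i : ℝ))), (N : ℝ) ^ α := by
          refine sum_le_sum fun i hi => ?_
          have := (mem_filter.mp hi).2
          exact le_of_not_ge this
      _ = (univ.filter (fun i => ¬ ((N : ℝ) ^ α ≤ (Ni N i : ℝ)))).card * (N : ℝ) ^ α := by
          rw [sum_const, nsmul_eq_mul]
      _ ≤ (R N : ℝ) * (N : ℝ) ^ α := by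
          gcongr
          exact_mod_cast (card_filter_le univ _).trans (by simp)
      _ ≤ (N : ℝ) ^ ρ * (N : ℝ) ^ α :=
          mul_le_mul_of_nonneg_right (hR N) (Real.rpow_nonneg hNpos.le α)
      _ = (N : ℝ) ^ (ρ + α) := (Real.rpow_add hNpos ρ α).symm
  have hkey : (N : ℝ) ≤ S.card * M + (N : ℝ) ^ (ρ + α) := by
    linarith
  -- bound N^(ρ+α) ≤ N/2
  have hbound1 : (N : ℝ) ^ (ρ + α) ≤ N / 2 := by
    have heq : (N : ℝ) ^ (ρ + α - 1) = (N : ℝ) ^ (ρ + α) / N := by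
      rw [Real.rpow_sub hNpos, Real.rpow_one]
    rw [heq, div_le_iff₀ hNpos] at hpow2
    linarith
  -- bound M < N / (2 (K+1))
  have hbound2 : (M : ℝ) < N / (2 * (K + 1)) := by
    rw [lt_div_iff₀ (by positivity)]
    rw [div_lt_div_iff₀ hNpos (by positivity : (0:ℝ) < 2 * (K + 1))] at hmax
    linarith
  have hMnonneg : (0 : ℝ) ≤ (M : ℝ) := Nat.cast_nonneg _
  have hcard : (0 : ℝ) ≤ (S.card : ℝ) := Nat.cast_nonneg _
  have h5 : (N : ℝ) / 2 ≤ S.card * M := by linarith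
  have h6 : (S.card : ℝ) * M ≤ S.card * (N / (2 * (K + 1))) := by
    exact mul_le_mul_of_nonneg_left hbound2.le hcard
  have h7 : (N : ℝ) / 2 ≤ S.card * (N / (2 * (K + 1))) := h5.trans h6
  have hKle : ((K : ℝ) + 1) ≤ S.card := by
    have hkpos : (0 : ℝ) < 2 * ((K : ℝ) + 1) := by positivity
    have h7' : (N : ℝ) / 2 ≤ (S.card * N) / (2 * (K + 1)) := by
      rw [mul_div_assoc]; exact h7
    rw [div_le_div_iff₀ (by norm_num : (0:ℝ) < 2) hkpos] at h7'
    nlinarith [h7', hNpos]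
  exact_mod_cast (by linarith : (K : ℝ) ≤ (S.card : ℝ))
end
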